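/- arXiv:1406.5135 — 8 statements merged into one kernel-verified Lean document; each statement's English description precedes it below -/
import Mathlib

section
/- For all integers k ≥ 4, ζ(k) - ζ(k+1) ≤ 1/k². -/
open Filter Topology Finset

/-- Riemann zeta at integer arguments: ζ(k) = ∑_{n=1}^∞ 1/n^k. -/
noncomputable def zeta (k : ℕ) : ℝ := ∑' n : ℕ, 1 / (n + 1 : ℝ) ^ k

/-- b_k = (-1)^{k+1} (1 - 2^{-k}) ζ(k+1). -/
noncomputable def b (k : ℕ) : ℝ := (-1) ^ (k + 1) * (1 - (2 : ℝ) ^ (-(k : ℤ))) * zeta (k + 1)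

/-!
ζ(k) - ζ(k+1) = ∑_{m ≥ 1} m / (m+1)^(k+1). For k ≥ 4 and m ≥ 1 we have 2^k m² ≤ (m+1)^k,
because ((m+1)/2)^k ≥ ((m+1)/2)^4 ≥ m² by AM-GM; hence each term is at most
2^{-k} / (m (m+1)) = 2^{-k} (1/m - 1/(m+1)), and the series telescopes to at most
2^{-k} ≤ 1/k².
-/

theorem hasSum_sub_succ_of_antitone {f : ℕ → ℝ} {l : ℝ} (hf : Antitone f)
    (hl : Tendsto f atTop (𝓝 l)) : HasSum (fun n ↦ f n - f (n + 1)) (f 0 - l) := by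
  rw [hasSum_iff_tendsto_nat_of_nonneg fun n ↦ sub_nonneg.2 (hf n.le_succ)]
  simpa only [sum_range_sub'] using hl.const_sub (f 0)

theorem hasSum_one_div_succ_sub_one_div_succ_succ :
    HasSum (fun n : ℕ ↦ 1 / ((n : ℝ) + 1) - 1 / ((n + 1 : ℕ) + 1)) 1 := by
  have hanti : Antitone fun n : ℕ ↦ 1 / ((n : ℝ) + 1) := fun m n hmn ↦
    one_div_le_one_div_of_le (by positivity) (by gcongr)
  simpa using hasSum_sub_succ_of_antitone hanti tendsto_one_div_add_atTop_nhds_zero_nat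

theorem hasSum_zeta {k : ℕ} (hk : 2 ≤ k) :
    HasSum (fun n : ℕ ↦ 1 / ((n : ℝ) + 1) ^ k) (zeta k) := by
  have hsum := (summable_nat_add_iff 1).2 (Real.summable_one_div_nat_pow.2 hk)
  push_cast at hsum
  exact hsum.hasSum

theorem hasSum_zeta_sub_zeta_succ {k : ℕ} (hk : 2 ≤ k) :
    HasSum (fun n : ℕ ↦ ((n + 1 : ℕ) : ℝ) / (((n + 1 : ℕ) : ℝ) + 1) ^ (k + 1))
      (zeta k - zeta (k + 1)) := by
  have hdiff := (hasSum_zeta hk).sub (hasSum_zeta (k.le_succ.trans' hk))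
  have hterm : ∀ n : ℕ, 1 / ((n : ℝ) + 1) ^ k - 1 / ((n : ℝ) + 1) ^ (k + 1)
      = n / ((n : ℝ) + 1) ^ (k + 1) := fun n ↦ by
    field_simp
    ring
  simp only [hterm] at hdiff
  simpa using (hasSum_nat_add_iff' 1).2 hdiff

theorem two_pow_mul_sq_le_add_one_pow {m : ℝ} (hm : 1 ≤ m) {k : ℕ} (hk : 4 ≤ k) :
    2 ^ k * m ^ 2 ≤ (m + 1) ^ k := by
  have hamgm : m ^ 2 ≤ ((m + 1) / 2) ^ 4 := by
    have h : m ≤ ((m + 1) / 2) ^ 2 := by nlinarith [sq_nonneg (m - 1)]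
    calc m ^ 2 ≤ (((m + 1) / 2) ^ 2) ^ 2 := by gcongr
      _ = ((m + 1) / 2) ^ 4 := by ring
  have hmono : ((m + 1) / 2) ^ 4 ≤ ((m + 1) / 2) ^ k :=
    pow_le_pow_right₀ (by linarith) hk
  have h := hamgm.trans hmono
  rwa [div_pow, le_div_iff₀ (by positivity), mul_comm] at h

theorem div_add_one_pow_succ_le {m : ℝ} (hm : 1 ≤ m) {k : ℕ} (hk : 4 ≤ k) :
    m / (m + 1) ^ (k + 1) ≤ (1 / m - 1 / (m + 1)) / 2 ^ k := by
  have hm0 : 0 < m := by linarith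
  have htel : 1 / m - 1 / (m + 1) = 1 / (m * (m + 1)) := by
    field_simp
    ring
  rw [htel, div_div, div_le_div_iff₀ (by positivity) (by positivity), pow_succ]
  nlinarith [mul_le_mul_of_nonneg_right (two_pow_mul_sq_le_add_one_pow hm hk)
    (by linarith : 0 ≤ m + 1)]

theorem Nat.sq_le_two_pow {k : ℕ} (hk : 4 ≤ k) : k ^ 2 ≤ 2 ^ k := by
  induction k, hk using Nat.le_induction with
  | base => norm_num
  | succ n hn ih =>
    calc (n + 1) ^ 2 ≤ 2 * n ^ 2 := by nlinarith
      _ ≤ 2 * 2 ^ n := by omega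
      _ = 2 ^ (n + 1) := by ring

theorem zeta_sub_zeta_succ_le_inv_two_pow {k : ℕ} (hk : 4 ≤ k) :
    zeta k - zeta (k + 1) ≤ 1 / 2 ^ k := by
  have hbound := hasSum_one_div_succ_sub_one_div_succ_succ.div_const ((2 : ℝ) ^ k)
  refine hasSum_le (fun n ↦ ?_) (hasSum_zeta_sub_zeta_succ (by omega)) hbound
  push_cast
  exact div_add_one_pow_succ_le (by simp) hk

theorem zeta_diff_le (k : ℕ) (hk : 4 ≤ k) :
    zeta k - zeta (k + 1) ≤ 1 / (k : ℝ) ^ 2 := by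
  have hsq : (k : ℝ) ^ 2 ≤ 2 ^ k := by exact_mod_cast Nat.sq_le_two_pow hk
  calc zeta k - zeta (k + 1) ≤ 1 / 2 ^ k := zeta_sub_zeta_succ_le_inv_two_pow hk
    _ ≤ 1 / (k : ℝ) ^ 2 := one_div_le_one_div_of_le (by positivity) hsq
end

section
/- For every integer k ≥ 1, |a_k| ≤ 1, where the sequence (a_k) is defined by a_0 = 1, a_1 = 0, a_2 = ζ(2)/4, and for k ≥ 3, a_k = (1/k)·∑_{j=0}^{k-2} a_j · b_{k-1-j}, with b_k = (-1)^{k+1}(1 - 2^{-k})ζ(k+1). -/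
/-!
Each `b k` with `k ≥ 1` is, up to sign, the Dirichlet eta value
`η(k + 1) = (1 - 2^{-k}) ζ(k + 1) = 1 - 2^{-(k+1)} + 3^{-(k+1)} - ⋯`, an alternating series with
decreasing terms, so `|b k| ≤ 1`. The recursion averages `k - 1` products `a j * b (k - 1 - j)`
with weight `1 / k`, so the bound `|a j| ≤ 1` propagates by strong induction; the base case
`a 2 = ζ(2)/4` uses `ζ(2) = η(2) / (1 - 2^{-1}) ≤ 2`.
-/

open Filter Topology Finset

lemma zeta_nonneg (k : ℕ) : 0 ≤ zeta k :=
  tsum_nonneg fun _ => by positivity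

lemma summable_one_div_succ_pow {s : ℕ} (hs : 2 ≤ s) :
    Summable fun n : ℕ => 1 / (n + 1 : ℝ) ^ s := by
  simpa using (summable_nat_add_iff 1).2 (Real.summable_one_div_nat_pow.2 hs)

lemma tsum_even_sub_tsum_odd_le_of_antitone {f : ℕ → ℝ} (hf : Summable f) (hanti : Antitone f) :
    ∑' k, f (2 * k) - ∑' k, f (2 * k + 1) ≤ f 0 := by
  have heven : Summable fun k => f (2 * k) := hf.comp_injective fun i j h => by omega
  have hodd : Summable fun k => f (2 * k + 1) := hf.comp_injective fun i j h => by omega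
  have hshift : ∑' k, f (2 * (k + 1)) ≤ ∑' k, f (2 * k + 1) :=
    ((summable_nat_add_iff 1).2 heven).tsum_le_tsum (fun k => hanti (by omega)) hodd
  rw [heven.tsum_eq_zero_add, mul_zero]
  linarith

lemma tsum_one_div_odd_succ_pow (s : ℕ) :
    ∑' k : ℕ, 1 / (((2 * k + 1 : ℕ) : ℝ) + 1) ^ s = zeta s / 2 ^ s := by
  have hterm (k : ℕ) : 1 / (((2 * k + 1 : ℕ) : ℝ) + 1) ^ s = 1 / ((k : ℝ) + 1) ^ s / 2 ^ s := by
    push_cast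
    rw [show (2 * (k : ℝ) + 1 + 1) = 2 * (k + 1) by ring, mul_pow, div_div, mul_comm]
  simp_rw [hterm, tsum_div_const, zeta]

lemma one_sub_two_zpow_neg_mul_zeta_le_one {m : ℕ} (hm : 1 ≤ m) :
    (1 - (2 : ℝ) ^ (-(m : ℤ))) * zeta (m + 1) ≤ 1 := by
  set f : ℕ → ℝ := fun n => 1 / (n + 1 : ℝ) ^ (m + 1) with hf_def
  have hf : Summable f := summable_one_div_succ_pow (by omega)
  have hanti : Antitone f := fun i j hij => by
    simp only [hf_def]
    gcongr
  have hzeta : zeta (m + 1) = ∑' k, f (2 * k) + ∑' k, f (2 * k + 1) :=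
    (tsum_even_add_odd (hf.comp_injective fun i j h => by omega)
      (hf.comp_injective fun i j h => by omega)).symm
  have hodd : (2 : ℝ) ^ (-(m : ℤ)) * zeta (m + 1) = 2 * ∑' k, f (2 * k + 1) := by
    rw [tsum_one_div_odd_succ_pow, zpow_neg, zpow_natCast, pow_succ]
    field_simp
  calc (1 - (2 : ℝ) ^ (-(m : ℤ))) * zeta (m + 1)
      = ∑' k, f (2 * k) - ∑' k, f (2 * k + 1) := by
        rw [sub_mul, hodd, one_mul, hzeta]
        ring
    _ ≤ f 0 := tsum_even_sub_tsum_odd_le_of_antitone hf hanti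
    _ = 1 := by simp [hf_def]

lemma abs_b_le_one {m : ℕ} (hm : 1 ≤ m) : |b m| ≤ 1 := by
  have hcoef : (0 : ℝ) ≤ 1 - (2 : ℝ) ^ (-(m : ℤ)) := by
    rw [zpow_neg, zpow_natCast, sub_nonneg]
    exact inv_le_one_of_one_le₀ (one_le_pow₀ one_le_two)
  rw [b, mul_assoc, abs_mul, abs_pow, abs_neg, abs_one, one_pow, one_mul,
    abs_of_nonneg (mul_nonneg hcoef (zeta_nonneg _))]
  exact one_sub_two_zpow_neg_mul_zeta_le_one hm

lemma abs_one_div_mul_sum_mul_b_le_one {a : ℕ → ℝ} {k : ℕ} (ha : ∀ j < k - 1, |a j| ≤ 1) :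
    |1 / (k : ℝ) * ∑ j ∈ range (k - 1), a j * b (k - 1 - j)| ≤ 1 := by
  have hsum : |∑ j ∈ range (k - 1), a j * b (k - 1 - j)| ≤ ((k - 1 : ℕ) : ℝ) :=
    calc |∑ j ∈ range (k - 1), a j * b (k - 1 - j)|
        ≤ ∑ j ∈ range (k - 1), |a j * b (k - 1 - j)| := abs_sum_le_sum_abs _ _
      _ ≤ ∑ _j ∈ range (k - 1), (1 : ℝ) := sum_le_sum fun j hj => by
          rw [mem_range] at hj
          rw [abs_mul]
          exact mul_le_one₀ (ha j hj) (abs_nonneg _) (abs_b_le_one (by omega))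
      _ = ((k - 1 : ℕ) : ℝ) := by simp
  rcases Nat.eq_zero_or_pos k with rfl | hk
  · simp
  have hk_sub : ((k - 1 : ℕ) : ℝ) ≤ k := by exact_mod_cast Nat.sub_le k 1
  rw [abs_mul, abs_of_nonneg (by positivity), one_div, inv_mul_le_iff₀ (by positivity)]
  linarith

theorem abs_a_le_one (a : ℕ → ℝ)
    (h0 : a 0 = 1) (h1 : a 1 = 0) (h2 : a 2 = zeta 2 / 4)
    (hrec : ∀ k, 3 ≤ k →
      a k = (1 / (k : ℝ)) * ∑ j ∈ Finset.range (k - 1), a j * b (k - 1 - j)) :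
    ∀ k, 1 ≤ k → |a k| ≤ 1 := by
  have hzeta2 : zeta 2 ≤ 2 := by
    have := one_sub_two_zpow_neg_mul_zeta_le_one (m := 1) le_rfl
    norm_num at this
    linarith
  have hall : ∀ k, |a k| ≤ 1 := by
    intro k
    induction k using Nat.strong_induction_on with
    | _ k ih =>
      match k with
      | 0 => simp [h0]
      | 1 => simp [h1]
      | 2 =>
        rw [h2, abs_of_nonneg (div_nonneg (zeta_nonneg 2) (by norm_num))]
        linarith
      | k + 3 =>
        rw [hrec (k + 3) (by omega)]
        exact abs_one_div_mul_sum_mul_b_le_one fun j hj => ih j (by omega)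
  exact fun k _ => hall k
end

section
/- For all integers k ≥ 1, a_{2k} > 0 and a_{2k+1} < 0, where (a_k) is defined by a_0 = 1, a_1 = 0, and a_k = (1/k)·∑_{j=0}^{k-2} a_j b_{k-1-j} for k ≥ 2, with b_k = (-1)^{k+1}(1 - 2^{-k})ζ(k+1). -/
open Filter Topology Finset

/-!
With `c k = (-1)^k a k` and `β m = (-1)^(m+1) b m > 0`, the recurrence keeps its shape:
`c k = (1/k) ∑ c j β (k-1-j)`. A convolution recurrence with positive kernel and
nonnegative start stays positive, so `(-1)^k a k > 0` for `k ≥ 2`.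
-/

section ConvolutionRecurrence

variable {K : Type*} [Field K]

theorem neg_one_pow_mul_convolution (a β : ℕ → K) (k : ℕ) :
    (-1) ^ k * ((1 / (k : K)) * ∑ j ∈ range (k - 1), a j * β (k - 1 - j)) =
      (1 / (k : K)) *
        ∑ j ∈ range (k - 1), ((-1) ^ j * a j) * ((-1) ^ (k - 1 - j + 1) * β (k - 1 - j)) := by
  rw [mul_left_comm, mul_sum]
  congr 1
  refine sum_congr rfl fun j hj => ?_
  rw [mem_range] at hj
  rw [show (-1 : K) ^ k = (-1) ^ j * (-1) ^ (k - 1 - j + 1) by rw [← pow_add]; congr 1; omega]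
  ring

variable [LinearOrder K] [IsStrictOrderedRing K]

theorem pos_of_convolution_recurrence {c β : ℕ → K} (hβ : ∀ m, 1 ≤ m → 0 < β m)
    (h0 : 0 < c 0) (h1 : 0 ≤ c 1)
    (hrec : ∀ k, 2 ≤ k →
      c k = (1 / (k : K)) * ∑ j ∈ range (k - 1), c j * β (k - 1 - j)) :
    ∀ k, 2 ≤ k → 0 < c k := by
  intro k
  induction k using Nat.strong_induction_on with
  | _ k ih =>
  intro hk
  have hc_nonneg : ∀ j < k, 0 ≤ c j := fun
    | 0, _ => h0.le
    | 1, _ => h1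
    | _ + 2, hj => (ih _ hj (by omega)).le
  have hsum : 0 < ∑ j ∈ range (k - 1), c j * β (k - 1 - j) := by
    refine sum_pos' (fun j hj => ?_)
      ⟨0, mem_range.mpr (by omega), mul_pos h0 (hβ _ (by omega))⟩
    rw [mem_range] at hj
    exact mul_nonneg (hc_nonneg j (by omega)) (hβ _ (by omega)).le
  rw [hrec k hk]
  exact mul_pos (by positivity) hsum

end ConvolutionRecurrence

theorem zeta_pos {k : ℕ} (hk : 2 ≤ k) : 0 < zeta k := by
  have hsum : Summable (fun n : ℕ => 1 / ((n : ℝ) + 1) ^ k) := by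
    simpa using (summable_nat_add_iff 1).mpr (Real.summable_one_div_nat_pow.mpr hk)
  exact hsum.tsum_pos (fun n => by positivity) 0 (by norm_num)

theorem neg_one_pow_succ_mul_b_pos {k : ℕ} (hk : 1 ≤ k) : 0 < (-1 : ℝ) ^ (k + 1) * b k := by
  have htwo : (2 : ℝ) ^ (-(k : ℤ)) < 1 := by
    rw [zpow_neg, zpow_natCast]
    exact inv_lt_one_of_one_lt₀ (one_lt_pow₀ (by norm_num) (by omega))
  have hsq : (-1 : ℝ) ^ (k + 1) * (-1) ^ (k + 1) = 1 := by
    rw [← pow_add, Even.neg_one_pow ⟨k + 1, rfl⟩]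
  calc (0 : ℝ) < (1 - 2 ^ (-(k : ℤ))) * zeta (k + 1) :=
        mul_pos (by linarith) (zeta_pos (by omega))
    _ = ((-1) ^ (k + 1) * (-1) ^ (k + 1)) * ((1 - 2 ^ (-(k : ℤ))) * zeta (k + 1)) := by
        rw [hsq, one_mul]
    _ = (-1) ^ (k + 1) * b k := by
        rw [b]
        ring

theorem a_sign_alternating (a : ℕ → ℝ)
    (h0 : a 0 = 1) (h1 : a 1 = 0)
    (hrec : ∀ k, 2 ≤ k →
      a k = (1 / (k : ℝ)) * ∑ j ∈ Finset.range (k - 1), a j * b (k - 1 - j)) :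
    ∀ k, 1 ≤ k → 0 < a (2 * k) ∧ a (2 * k + 1) < 0 := by
  have hsign : ∀ k, 2 ≤ k → 0 < (-1 : ℝ) ^ k * a k :=
    pos_of_convolution_recurrence (β := fun m => (-1) ^ (m + 1) * b m)
      (fun _ hm => neg_one_pow_succ_mul_b_pos hm) (by simp [h0]) (by simp [h1])
      (fun k hk => by rw [hrec k hk, neg_one_pow_mul_convolution])
  intro k hk
  have heven := hsign (2 * k) (by omega)
  have hodd := hsign (2 * k + 1) (by omega)
  rw [Even.neg_one_pow ⟨k, by ring⟩, one_mul] at heven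
  rw [Odd.neg_one_pow ⟨k, by ring⟩, neg_one_mul, neg_pos] at hodd
  exact ⟨heven, hodd⟩
end

section
/- For integers k ≥ 4 and 0 ≤ j ≤ k-4 (so that k - j ≥ 4), one has |b_{k-j}/(k+1) + b_{k-1-j}/k| ≤ 2/((k+1)(k-j)²) + ζ(2)/(2^{k-j}(k+1)) + ζ(2)/(k(k+1)), where b_k = (-1)^{k+1}(1 - 2^{-k})ζ(k+1). -/
open Filter Topology Finset

/-! Write m = k - j and u = 2⁻ᵐ. Splitting 1/k = 1/(k+1) + 1/(k(k+1)), the combination equals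
±[(ζ(m) - ζ(m+1) - u (2ζ(m) - ζ(m+1)))/(k+1) + (1 - 2u) ζ(m)/(k(k+1))]. Comparing termwise with
ζ(4) = π⁴/90 gives ζ(m) - 1 ≤ 2^(4-m) (ζ(4) - 1) ≤ 2/2ᵐ, hence 0 ≤ ζ(m) - ζ(m+1) ≤ 2/m² and
0 ≤ 2ζ(m) - ζ(m+1) ≤ 1 + 4/2ᵐ ≤ 5/4 ≤ ζ(2), while 0 ≤ (1 - 2u) ζ(m) ≤ ζ(2). -/

open Real

lemma summable_one_div_add_pow {m : ℕ} (hm : 2 ≤ m) (c : ℕ) :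
    Summable fun n : ℕ => 1 / ((n : ℝ) + c) ^ m := by
  simpa using (summable_nat_add_iff c).2 (summable_one_div_nat_pow.2 (by omega : 1 < m))

lemma zeta_eq_of_hasSum {m : ℕ} {a : ℝ} (hm : m ≠ 0)
    (h : HasSum (fun n : ℕ => 1 / (n : ℝ) ^ m) a) : zeta m = a := by
  have := (hasSum_nat_add_iff' 1).2 h
  simp only [Nat.cast_add, Nat.cast_one, range_one, sum_singleton, Nat.cast_zero,
    zero_pow hm, div_zero, sub_zero] at this
  exact this.tsum_eq

lemma zeta_two : zeta 2 = π ^ 2 / 6 := zeta_eq_of_hasSum two_ne_zero hasSum_zeta_two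

lemma zeta_four : zeta 4 = π ^ 4 / 90 := zeta_eq_of_hasSum four_ne_zero hasSum_zeta_four

lemma zeta_eq_one_add {m : ℕ} (hm : 2 ≤ m) :
    zeta m = 1 + ∑' n : ℕ, 1 / ((n : ℝ) + 2) ^ m := by
  rw [zeta, (by simpa using summable_one_div_add_pow hm 1 :
    Summable fun n : ℕ => 1 / ((n : ℝ) + 1) ^ m).tsum_eq_zero_add]
  push_cast
  ring_nf

lemma one_le_zeta {m : ℕ} (hm : 2 ≤ m) : 1 ≤ zeta m := by
  rw [zeta_eq_one_add hm, le_add_iff_nonneg_right]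
  exact tsum_nonneg fun n => by positivity

lemma zeta_sub_one_le {m p : ℕ} (hp : 2 ≤ p) (hpm : p ≤ m) :
    zeta m - 1 ≤ (zeta p - 1) / 2 ^ (m - p) := by
  rw [zeta_eq_one_add hp, zeta_eq_one_add (hp.trans hpm), add_sub_cancel_left,
    add_sub_cancel_left, ← tsum_div_const]
  refine (summable_one_div_add_pow (hp.trans hpm) 2).tsum_le_tsum (fun n => ?_)
    ((summable_one_div_add_pow hp 2).div_const _)
  have hx : (2 : ℝ) ≤ n + 2 := by linarith [n.cast_nonneg (α := ℝ)]
  calc 1 / ((n : ℝ) + 2) ^ m = 1 / (((n : ℝ) + 2) ^ p * ((n : ℝ) + 2) ^ (m - p)) := by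
        rw [← pow_add, Nat.add_sub_cancel' hpm]
    _ ≤ 1 / (((n : ℝ) + 2) ^ p * 2 ^ (m - p)) := by gcongr
    _ = 1 / ((n : ℝ) + 2) ^ p / 2 ^ (m - p) := by rw [div_div]

lemma zeta_le_zeta_of_le {m p : ℕ} (hm : 2 ≤ m) (hmp : m ≤ p) : zeta p ≤ zeta m := by
  have hp := zeta_sub_one_le hm hmp
  have hdiv : (zeta m - 1) / 2 ^ (p - m) ≤ zeta m - 1 :=
    div_le_self (by linarith [one_le_zeta hm]) (one_le_pow₀ one_le_two)
  linarith

lemma zeta_sub_one_le_two_div_two_pow {m : ℕ} (hm : 4 ≤ m) : zeta m - 1 ≤ 2 / 2 ^ m := by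
  have h4 : zeta 4 - 1 ≤ 1 / 8 := by
    have : π ^ 4 < 3.15 ^ 4 := pow_lt_pow_left₀ pi_lt_d2 pi_pos.le four_ne_zero
    rw [zeta_four]
    linarith
  calc zeta m - 1 ≤ (zeta 4 - 1) / 2 ^ (m - 4) := zeta_sub_one_le (by norm_num) hm
    _ ≤ 1 / 8 / 2 ^ (m - 4) := by gcongr
    _ = 2 / 2 ^ m := by
      rw [div_div, ← Nat.sub_add_cancel hm, pow_add]; field_simp; norm_num

lemma sq_le_two_pow {m : ℕ} (hm : 4 ≤ m) : m ^ 2 ≤ 2 ^ m := by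
  induction m, hm using Nat.le_induction with
  | base => norm_num
  | succ m hm ih =>
    calc (m + 1) ^ 2 = m ^ 2 + (2 * m + 1) := by ring
      _ ≤ 2 ^ m + 2 ^ m := by nlinarith
      _ = 2 ^ (m + 1) := by ring

lemma zeta_sub_zeta_succ_le {m : ℕ} (hm : 4 ≤ m) : zeta m - zeta (m + 1) ≤ 2 / (m : ℝ) ^ 2 := by
  have h2m : ((m ^ 2 : ℕ) : ℝ) ≤ ((2 ^ m : ℕ) : ℝ) := by exact_mod_cast sq_le_two_pow hm
  push_cast at h2m
  calc zeta m - zeta (m + 1) ≤ zeta m - 1 := by linarith [one_le_zeta (m := m + 1) (by omega)]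
    _ ≤ 2 / 2 ^ m := zeta_sub_one_le_two_div_two_pow hm
    _ ≤ 2 / (m : ℝ) ^ 2 := by gcongr

lemma two_mul_zeta_sub_zeta_succ_le {m : ℕ} (hm : 4 ≤ m) :
    2 * zeta m - zeta (m + 1) ≤ zeta 2 := by
  have h2m : (2 : ℝ) / 2 ^ m ≤ 2 / 2 ^ 4 := by gcongr; norm_num
  have hζ2 : 5 / 4 ≤ zeta 2 := by
    rw [zeta_two]
    nlinarith [pi_gt_three]
  linarith [one_le_zeta (m := m + 1) (by omega), zeta_sub_one_le_two_div_two_pow hm]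

lemma b_eq (m : ℕ) : b m = (-1) ^ (m + 1) * (1 - (2 ^ m)⁻¹) * zeta (m + 1) := by
  rw [b, zpow_neg, zpow_natCast]

lemma b_div_add_b_pred_div {m : ℕ} (hm : 1 ≤ m) {K : ℝ} (hK : K ≠ 0) (hK1 : K + 1 ≠ 0) :
    b m / (K + 1) + b (m - 1) / K = (-1) ^ m *
      ((zeta m - zeta (m + 1) - (2 ^ m)⁻¹ * (2 * zeta m - zeta (m + 1))) / (K + 1) +
        (1 - 2 * (2 ^ m)⁻¹) * zeta m / (K * (K + 1))) := by
  obtain ⟨n, rfl⟩ := Nat.exists_eq_add_of_le' hm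
  rw [b_eq, b_eq, Nat.add_sub_cancel]
  field_simp
  ring

lemma abs_one_sub_two_div_two_pow_mul_zeta_le {m : ℕ} (hm : 2 ≤ m) :
    |(1 - 2 * (2 ^ m)⁻¹) * zeta m| ≤ zeta 2 := by
  have hu : 2 * ((2 : ℝ) ^ m)⁻¹ ≤ 1 := by
    rw [← div_eq_mul_inv, div_le_one (by positivity)]
    exact le_self_pow₀ one_le_two (by omega)
  have hu0 : 0 ≤ ((2 : ℝ) ^ m)⁻¹ := by positivity
  have hζ : 0 ≤ zeta m := by linarith [one_le_zeta hm]
  rw [abs_of_nonneg (by nlinarith)]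
  nlinarith [zeta_le_zeta_of_le le_rfl hm]

lemma abs_sub_div_add_div_le {K A E B u c z : ℝ} (hK : 0 < K) (hA0 : 0 ≤ A) (hA : A ≤ c)
    (hu : 0 ≤ u) (hE0 : 0 ≤ E) (hE : E ≤ z) (hB : |B| ≤ z) :
    |(A - u * E) / (K + 1) + B / (K * (K + 1))| ≤
      c / (K + 1) + u * z / (K + 1) + z / (K * (K + 1)) := by
  have hAuE : |A - u * E| ≤ c + u * z := by
    rw [abs_le]; constructor <;> nlinarith
  calc _ ≤ |(A - u * E) / (K + 1)| + |B / (K * (K + 1))| := abs_add_le _ _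
    _ ≤ (c + u * z) / (K + 1) + z / (K * (K + 1)) := by
        rw [abs_div, abs_div, abs_of_pos (by positivity : 0 < K + 1),
          abs_of_pos (by positivity : 0 < K * (K + 1))]
        gcongr
    _ = _ := by rw [add_div]

theorem b_combination_bound (k j : ℕ) (hk : 4 ≤ k) (hj : j ≤ k - 4) :
    |b (k - j) / ((k : ℝ) + 1) + b (k - 1 - j) / (k : ℝ)| ≤
      2 / (((k : ℝ) + 1) * ((k : ℝ) - (j : ℝ)) ^ 2) +
      zeta 2 / (2 ^ (k - j) * ((k : ℝ) + 1)) +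
      zeta 2 / ((k : ℝ) * ((k : ℝ) + 1)) := by
  have hm : 4 ≤ k - j := by omega
  have hK : (0 : ℝ) < k := by exact_mod_cast (by omega : 0 < k)
  have hkj : (k : ℝ) - j = (k - j : ℕ) := by push_cast [show j ≤ k by omega]; ring
  rw [hkj, Nat.sub_right_comm, b_div_add_b_pred_div (by omega) hK.ne' (by positivity), abs_mul,
    abs_pow, abs_neg, abs_one, one_pow, one_mul]
  have hζ : zeta (k - j + 1) ≤ zeta (k - j) := zeta_le_zeta_of_le (by omega) le_self_add
  have hζ1 : 1 ≤ zeta (k - j + 1) := one_le_zeta (by omega)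
  refine (abs_sub_div_add_div_le hK (by linarith) (zeta_sub_zeta_succ_le hm) (by positivity)
    (by linarith) (two_mul_zeta_sub_zeta_succ_le hm) (abs_one_sub_two_div_two_pow_mul_zeta_le
    (by omega))).trans_eq (by field_simp)
end

section
/- k·(a_{k+1} + a_k) → 0 as k → ∞, i.e., a_{k+1} + a_k = o(1/k), where (a_k) satisfies a_0 = 1, a_1 = 0, a_k = (1/k)∑_{j=0}^{k-2} a_j b_{k-1-j} for k ≥ 2 with b_k = (-1)^{k+1}(1 - 2^{-k})ζ(k+1). -/
open Filter Topology Finset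

/-!
Write `b m = (-1) ^ (m + 1) * (1 + ε m)` with `ε = bDefect`; a comparison with `ζ(2) - 1 < 1` gives
`|ε m| ≤ 2⁻ᵐ` for `m ≥ 1`. For `A j = (-1) ^ j * a j` the recurrence becomes
`(n + 1) A (n + 1) = ∑_{j < n} A j (1 + ε (n - j))`, and subtracting two consecutive instances
leaves, for the differences `Δ i = A (i + 1) - A i`, only terms that are small:
`(n + 2) Δ (n + 1) = -Δ n + A 0 ε (n + 1) + ∑_{i < n} Δ i ε (n - i)`.
Strong induction then gives `|Δ n| ≤ (3/4) ^ n`, and `|a (k + 1) + a k| = |Δ k|`.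
-/

lemma summable_one_div_add_two_pow {k : ℕ} (hk : 2 ≤ k) :
    Summable (fun n : ℕ => 1 / ((n : ℝ) + 2) ^ k) := by
  simpa using (summable_nat_add_iff 2).2 (Real.summable_one_div_nat_pow.2 (by omega : 1 < k))

lemma zeta_eq_one_add_tsum {k : ℕ} (hk : 2 ≤ k) :
    zeta k = 1 + ∑' n : ℕ, 1 / ((n : ℝ) + 2) ^ k := by
  have hs : Summable (fun n : ℕ => 1 / ((n : ℝ) + 1) ^ k) := by
    simpa using (summable_nat_add_iff 1).2 (Real.summable_one_div_nat_pow.2 (by omega : 1 < k))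
  rw [zeta, hs.tsum_eq_zero_add]
  push_cast
  ring_nf

lemma hasSum_one_div_add_two_sq :
    HasSum (fun n : ℕ => 1 / ((n : ℝ) + 2) ^ 2) (Real.pi ^ 2 / 6 - 1) := by
  simpa [sum_range_succ] using (hasSum_nat_add_iff' 2).2 hasSum_zeta_two

lemma tsum_one_div_add_two_pow_le (k : ℕ) :
    ∑' n : ℕ, 1 / ((n : ℝ) + 2) ^ (k + 2) ≤ (1 / 2) ^ k := by
  have hterm (n : ℕ) :
      1 / ((n : ℝ) + 2) ^ (k + 2) ≤ (1 / 2) ^ k * (1 / ((n : ℝ) + 2) ^ 2) := by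
    rw [pow_add, div_pow, one_pow, ← one_div_mul_one_div]
    gcongr
    linarith [(n.cast_nonneg : (0 : ℝ) ≤ n)]
  have hpi : Real.pi ^ 2 / 6 - 1 ≤ 1 := by nlinarith [Real.pi_lt_d2, Real.pi_pos]
  calc ∑' n : ℕ, 1 / ((n : ℝ) + 2) ^ (k + 2)
      ≤ ∑' n : ℕ, (1 / 2) ^ k * (1 / ((n : ℝ) + 2) ^ 2) :=
        (summable_one_div_add_two_pow (by omega)).tsum_le_tsum hterm
          (hasSum_one_div_add_two_sq.summable.mul_left _)
    _ = (1 / 2) ^ k * (Real.pi ^ 2 / 6 - 1) := by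
        rw [tsum_mul_left, hasSum_one_div_add_two_sq.tsum_eq]
    _ ≤ (1 / 2) ^ k := mul_le_of_le_one_right (by positivity) hpi

noncomputable def bDefect (m : ℕ) : ℝ := (1 - (2 : ℝ) ^ (-(m : ℤ))) * zeta (m + 1) - 1

lemma b_eq_neg_one_pow_mul (m : ℕ) : b m = (-1) ^ (m + 1) * (1 + bDefect m) := by
  unfold b bDefect
  ring

lemma abs_bDefect_le {m : ℕ} (hm : 1 ≤ m) : |bDefect m| ≤ (1 / 2) ^ m := by
  obtain ⟨k, rfl⟩ : ∃ k, m = k + 1 := ⟨m - 1, by omega⟩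
  set t := ∑' n : ℕ, 1 / ((n : ℝ) + 2) ^ (k + 2)
  have ht0 : 0 ≤ t := tsum_nonneg fun n => by positivity
  have ht : t ≤ (1 / 2) ^ k := tsum_one_div_add_two_pow_le k
  have hpow : (2 : ℝ) ^ (-((k + 1 : ℕ) : ℤ)) = (1 / 2) ^ k / 2 := by
    rw [zpow_neg, zpow_natCast, pow_succ, one_div_pow, div_div, one_div]
  have hk : (1 / 2 : ℝ) ^ k ≤ 1 := pow_le_one₀ (by norm_num) (by norm_num)
  rw [bDefect, zeta_eq_one_add_tsum (by omega), hpow, abs_le, pow_succ]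
  constructor <;> nlinarith [pow_pos (by norm_num : (0 : ℝ) < 1 / 2) k]

lemma sum_pow_mul_pow_sub_mul {R : Type*} [CommRing R] (x y : R) (n : ℕ) :
    (∑ i ∈ range n, x ^ i * y ^ (n - i)) * (x - y) = y * (x ^ n - y ^ n) := by
  rw [← geom_sum₂_mul, ← mul_assoc, mul_sum]
  congr 1
  refine sum_congr rfl fun i hi => ?_
  rw [show n - i = n - 1 - i + 1 by have := mem_range.1 hi; omega, pow_succ]
  ring

lemma three_quarters_pow_add_le (n : ℕ) :
    (3 / 4 : ℝ) ^ n + (1 / 2) ^ (n + 1) + 2 * ((3 / 4) ^ n - (1 / 2) ^ n) ≤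
      ((n : ℝ) + 2) * (3 / 4) ^ (n + 1) := by
  match n with
  | 0 => norm_num
  | 1 => norm_num
  | n + 2 =>
    have : (0 : ℝ) ≤ (1 / 2) ^ (n + 2) := by positivity
    have : (0 : ℝ) ≤ (n : ℝ) * (3 / 4) ^ (n + 2) := by positivity
    push_cast
    rw [pow_succ (3 / 4 : ℝ) (n + 2), pow_succ (1 / 2 : ℝ) (n + 2)]
    linarith

lemma le_three_quarters_pow {x : ℕ → ℝ} (h0 : x 0 ≤ 1)
    (hrec : ∀ n : ℕ, ((n : ℝ) + 2) * x (n + 1) ≤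
      x n + (1 / 2) ^ (n + 1) + ∑ i ∈ range n, x i * (1 / 2) ^ (n - i)) (n : ℕ) :
    x n ≤ (3 / 4) ^ n := by
  induction n using Nat.strong_induction_on with
  | _ n ih =>
  match n with
  | 0 => simpa using h0
  | n + 1 =>
    have hgeom : ∑ i ∈ range n, (3 / 4 : ℝ) ^ i * (1 / 2) ^ (n - i) =
        2 * ((3 / 4) ^ n - (1 / 2) ^ n) := by
      linear_combination 4 * sum_pow_mul_pow_sub_mul (3 / 4 : ℝ) (1 / 2) n
    have hsum : ∑ i ∈ range n, x i * (1 / 2) ^ (n - i) ≤ 2 * ((3 / 4) ^ n - (1 / 2) ^ n) :=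
      hgeom ▸ sum_le_sum fun i hi => by
        gcongr
        exact ih i (by have := mem_range.1 hi; omega)
    have h := ((hrec n).trans (add_le_add (add_le_add_left (ih n (by omega)) _) hsum)).trans
      (three_quarters_pow_add_le n)
    exact le_of_mul_le_mul_left h (by positivity)

section PerturbedMeanRecurrence

variable {A e : ℕ → ℝ}
  (hA : ∀ n : ℕ, ((n : ℝ) + 1) * A (n + 1) = ∑ j ∈ range n, A j * (1 + e (n - j)))
include hA

lemma add_two_mul_sub_eq (n : ℕ) :
    ((n : ℝ) + 2) * (A (n + 2) - A (n + 1)) =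
      -(A (n + 1) - A n) + A 0 * e (n + 1) + ∑ i ∈ range n, (A (i + 1) - A i) * e (n - i) := by
  have h := hA (n + 1)
  have h' := hA n
  simp only [mul_add, mul_one, sum_add_distrib] at h h'
  rw [sum_range_succ A, sum_range_succ' (fun j => A j * e (n + 1 - j))] at h
  simp only [Nat.add_sub_add_right, Nat.sub_zero] at h
  push_cast at h
  simp only [sub_mul, sum_sub_distrib]
  linear_combination h - h'

lemma abs_sub_le_three_quarters_pow (h0 : |A 0| ≤ 1) (he : ∀ m, 1 ≤ m → |e m| ≤ (1 / 2) ^ m)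
    (n : ℕ) : |A (n + 1) - A n| ≤ (3 / 4) ^ n := by
  refine le_three_quarters_pow (x := fun n => |A (n + 1) - A n|) ?_ (fun n => ?_) n
  · have := hA 0
    simp_all
  · calc ((n : ℝ) + 2) * |A (n + 2) - A (n + 1)|
        = |-(A (n + 1) - A n) + A 0 * e (n + 1) +
            ∑ i ∈ range n, (A (i + 1) - A i) * e (n - i)| := by
          rw [← add_two_mul_sub_eq hA, abs_mul, abs_of_pos (by positivity : (0 : ℝ) < n + 2)]
      _ ≤ |A (n + 1) - A n| + |A 0| * |e (n + 1)| +
            ∑ i ∈ range n, |A (i + 1) - A i| * |e (n - i)| := by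
          grw [abs_add_le, abs_add_le, abs_neg, abs_mul, abs_sum_le_sum_abs]
          simp only [abs_mul, le_refl]
      _ ≤ _ := by
          gcongr with i hi
          · exact (mul_le_of_le_one_left (abs_nonneg _) h0).trans (he _ (by omega))
          · exact he _ (by have := mem_range.1 hi; omega)

end PerturbedMeanRecurrence

lemma neg_one_pow_mul_a_succ (a : ℕ → ℝ) (h1 : a 1 = 0)
    (hrec : ∀ k, 2 ≤ k →
      a k = (1 / (k : ℝ)) * ∑ j ∈ Finset.range (k - 1), a j * b (k - 1 - j)) (n : ℕ) :
    ((n : ℝ) + 1) * ((-1) ^ (n + 1) * a (n + 1)) =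
      ∑ j ∈ range n, (-1) ^ j * a j * (1 + bDefect (n - j)) := by
  rcases Nat.eq_zero_or_pos n with rfl | hn
  · simp [h1]
  have hn' : (n : ℝ) + 1 ≠ 0 := by positivity
  rw [hrec (n + 1) (by omega), Nat.add_sub_cancel]
  push_cast
  rw [mul_left_comm, one_div, mul_inv_cancel_left₀ hn', mul_sum]
  refine sum_congr rfl fun j hj => ?_
  obtain ⟨d, rfl⟩ := Nat.exists_eq_add_of_lt (mem_range.1 hj)
  have hsq : ((-1 : ℝ) ^ d) ^ 2 = 1 := by rw [← pow_mul, pow_mul', neg_one_sq, one_pow]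
  rw [b_eq_neg_one_pow_mul, show j + d + 1 - j = d + 1 by omega]
  linear_combination (-1) ^ j * a j * (1 + bDefect (d + 1)) * hsq

lemma abs_a_succ_add_a_le (a : ℕ → ℝ) (h0 : a 0 = 1) (h1 : a 1 = 0)
    (hrec : ∀ k, 2 ≤ k →
      a k = (1 / (k : ℝ)) * ∑ j ∈ Finset.range (k - 1), a j * b (k - 1 - j)) (k : ℕ) :
    |a (k + 1) + a k| ≤ (3 / 4) ^ k := by
  have h := abs_sub_le_three_quarters_pow (A := fun j => (-1) ^ j * a j)
    (neg_one_pow_mul_a_succ a h1 hrec) (by simp [h0]) (fun _ => abs_bDefect_le) k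
  have hA : (-1) ^ (k + 1) * a (k + 1) - (-1) ^ k * a k = -((-1) ^ k * (a (k + 1) + a k)) := by
    ring
  rwa [hA, abs_neg, abs_mul, abs_neg_one_pow, one_mul] at h

theorem a_succ_add_a_littleO (a : ℕ → ℝ)
    (h0 : a 0 = 1) (h1 : a 1 = 0)
    (hrec : ∀ k, 2 ≤ k →
      a k = (1 / (k : ℝ)) * ∑ j ∈ Finset.range (k - 1), a j * b (k - 1 - j)) :
    Tendsto (fun k : ℕ => (k : ℝ) * (a (k + 1) + a k)) atTop (𝓝 0) := by
  refine squeeze_zero_norm (fun k => ?_)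
    (tendsto_self_mul_const_pow_of_lt_one (r := 3 / 4) (by norm_num) (by norm_num))
  rw [norm_mul, Real.norm_natCast, Real.norm_eq_abs]
  exact mul_le_mul_of_nonneg_left (abs_a_succ_add_a_le a h0 h1 hrec k) k.cast_nonneg
end

section
/- For |s| < 1, the Akatsuka zeta Mahler measure of x - r with |r| = 1 satisfies Z(s, x-r) = Γ(s+1)/Γ(s/2+1)², where Z(s,P) = ∫₀¹ |P(e^{2πiθ})|^s dθ. -/
/-!
Writing `r = exp (2πic)` and using the 1-periodicity of the integrand in `θ`, the shift
`θ ↦ θ + c` reduces to `r = 1`, where `|exp (2πiθ) - 1| = 2 sin (πθ)` on `[0, 1]`. The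
substitution `x = (1 - cos πθ) / 2` turns `∫₀¹ sin (πθ) ^ s dθ` into a Beta integral
`B((s+1)/2, (s+1)/2)`, and Legendre's duplication formula puts `Γ((s+1)/2)² / Γ(s+1)` into the
stated form.
-/

open Real MeasureTheory Set

theorem integral_rpow_mul_one_sub_rpow {u v : ℝ} (hu : 0 < u) (hv : 0 < v) :
    ∫ x in (0:ℝ)..1, x ^ (u - 1) * (1 - x) ^ (v - 1) = Gamma u * Gamma v / Gamma (u + v) := by
  have hB : ((∫ x in (0:ℝ)..1, x ^ (u - 1) * (1 - x) ^ (v - 1) : ℝ) : ℂ) =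
      Complex.betaIntegral u v := by
    rw [Complex.betaIntegral, ← intervalIntegral.integral_ofReal]
    refine intervalIntegral.integral_congr fun x hx => ?_
    rw [uIcc_of_le zero_le_one] at hx
    simp only [Complex.ofReal_mul, Complex.ofReal_cpow hx.1,
      Complex.ofReal_cpow (sub_nonneg.2 hx.2), Complex.ofReal_sub, Complex.ofReal_one]
  rw [← Complex.ofReal_inj, hB, Complex.betaIntegral_eq_Gamma_mul_div _ _ (by simpa) (by simpa)]
  push_cast [← Complex.Gamma_ofReal]
  rfl

theorem integral_Icc_four_mul_mul_one_sub_rpow {s : ℝ} (hs : -1 < s) :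
    ∫ x in Icc (0:ℝ) 1, (4 * x * (1 - x)) ^ ((s - 1) / 2) =
      2 ^ (s - 1) * (Gamma ((s + 1) / 2) ^ 2 / Gamma (s + 1)) := by
  have hbeta := integral_rpow_mul_one_sub_rpow (u := (s + 1) / 2) (v := (s + 1) / 2)
    (by linarith) (by linarith)
  rw [show (s + 1) / 2 - 1 = (s - 1) / 2 by ring, add_halves] at hbeta
  have h4 : (4 : ℝ) ^ ((s - 1) / 2) = 2 ^ (s - 1) := by
    rw [show (4 : ℝ) = 2 ^ (2 : ℝ) by norm_num, ← rpow_mul zero_le_two]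
    ring_nf
  rw [integral_Icc_eq_integral_Ioc, ← intervalIntegral.integral_of_le zero_le_one, sq, ← hbeta,
    ← h4, ← intervalIntegral.integral_const_mul]
  refine intervalIntegral.integral_congr fun x hx => ?_
  rw [uIcc_of_le zero_le_one] at hx
  rw [mul_assoc, mul_rpow zero_le_four (mul_nonneg hx.1 (sub_nonneg.2 hx.2)),
    mul_rpow hx.1 (sub_nonneg.2 hx.2)]

theorem integral_sin_pi_mul_rpow {s : ℝ} (hs : -1 < s) :
    ∫ θ in (0:ℝ)..1, sin (π * θ) ^ s = 2 ^ s / π * (Gamma ((s + 1) / 2) ^ 2 / Gamma (s + 1)) := by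
  have hsin {θ : ℝ} (hθ : θ ∈ Ioo 0 1) : 0 < sin (π * θ) :=
    sin_pos_of_pos_of_lt_pi (by nlinarith [hθ.1, pi_pos]) (by nlinarith [hθ.2, pi_pos])
  -- `x = (1 - cos πθ) / 2` has `4 x (1 - x) = sin² πθ` and `dx = (π / 2) sin πθ dθ`.
  have hsub := integral_Icc_deriv_smul_of_deriv_nonneg (a := 0) (b := 1)
    (f := fun θ => (1 - cos (π * θ)) / 2) (f' := fun θ => π / 2 * sin (π * θ))
    (g := fun x => (4 * x * (1 - x)) ^ ((s - 1) / 2)) (by fun_prop)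
    (fun θ _ => ((((hasDerivAt_id θ).const_mul π).cos.const_sub 1).div_const 2).congr_deriv
      (by simp only [id, mul_one]; ring))
    (fun θ hθ => mul_nonneg (by positivity) (hsin hθ).le) zero_le_one
  have hlhs : ∫ θ in Icc (0:ℝ) 1, (π / 2 * sin (π * θ)) • (4 * ((1 - cos (π * θ)) / 2) *
      (1 - (1 - cos (π * θ)) / 2)) ^ ((s - 1) / 2) = π / 2 * ∫ θ in (0:ℝ)..1, sin (π * θ) ^ s := by
    rw [intervalIntegral.integral_of_le zero_le_one, integral_Icc_eq_integral_Ioo,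
      integral_Ioc_eq_integral_Ioo, ← integral_const_mul]
    refine setIntegral_congr_fun measurableSet_Ioo fun θ hθ => ?_
    have h4 : 4 * ((1 - cos (π * θ)) / 2) * (1 - (1 - cos (π * θ)) / 2) = sin (π * θ) ^ 2 := by
      nlinarith [sin_sq_add_cos_sq (π * θ)]
    rw [smul_eq_mul, h4, ← rpow_natCast, ← rpow_mul (hsin hθ).le, Nat.cast_ofNat,
      show (2:ℝ) * ((s - 1) / 2) = s - 1 by ring, rpow_sub_one (hsin hθ).ne']
    field_simp [(hsin hθ).ne']
  rw [show (1 - cos (π * 0)) / 2 = (0 : ℝ) by simp, show (1 - cos (π * 1)) / 2 = (1 : ℝ) by simp,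
    hlhs, integral_Icc_four_mul_mul_one_sub_rpow hs, rpow_sub_one two_ne_zero] at hsub
  field_simp [pi_ne_zero] at hsub ⊢
  linarith

theorem norm_exp_two_pi_mul_I_sub_one (θ : ℝ) :
    ‖Complex.exp (2 * π * Complex.I * θ) - 1‖ = 2 * |sin (π * θ)| := by
  rw [show 2 * π * Complex.I * θ = Complex.I * ↑(2 * π * θ) by push_cast; ring,
    Complex.norm_exp_I_mul_ofReal_sub_one, show 2 * π * θ / 2 = π * θ by ring, norm_mul,
    Real.norm_two, Real.norm_eq_abs]

theorem integral_norm_exp_two_pi_mul_I_sub_one_rpow {s : ℝ} (hs : -1 < s) :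
    ∫ θ in (0:ℝ)..1, ‖Complex.exp (2 * π * Complex.I * θ) - 1‖ ^ s =
      Gamma (s + 1) / Gamma (s / 2 + 1) ^ 2 := by
  calc ∫ θ in (0:ℝ)..1, ‖Complex.exp (2 * π * Complex.I * θ) - 1‖ ^ s
      = ∫ θ in (0:ℝ)..1, 2 ^ s * sin (π * θ) ^ s := by
        refine intervalIntegral.integral_congr fun θ hθ => ?_
        rw [uIcc_of_le zero_le_one] at hθ
        have hsin : 0 ≤ sin (π * θ) :=
          sin_nonneg_of_nonneg_of_le_pi (by nlinarith [hθ.1, pi_pos]) (by nlinarith [hθ.2, pi_pos])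
        simp only [norm_exp_two_pi_mul_I_sub_one, abs_of_nonneg hsin, mul_rpow zero_le_two hsin]
    _ = Gamma (s + 1) / Gamma (s / 2 + 1) ^ 2 := by
        have hdup := Gamma_mul_Gamma_add_half ((s + 1) / 2)
        rw [show (s + 1) / 2 + 1 / 2 = s / 2 + 1 by ring, show 2 * ((s + 1) / 2) = s + 1 by ring,
          show 1 - (s + 1) = -s by ring] at hdup
        have hP : 0 < Gamma (s / 2 + 1) := Gamma_pos_of_pos (by linarith)
        have hQ : 0 < Gamma (s + 1) := Gamma_pos_of_pos (by linarith)
        have h2 : (2 : ℝ) ^ s * 2 ^ (-s) = 1 := by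
          rw [← rpow_add two_pos, add_neg_cancel, rpow_zero]
        have hπ : √π ^ 2 = π := sq_sqrt pi_pos.le
        rw [intervalIntegral.integral_const_mul, integral_sin_pi_mul_rpow hs,
          eq_div_of_mul_eq hP.ne' hdup]
        field_simp
        rw [← mul_pow, h2, one_pow, one_mul, hπ]

theorem integral_comp_exp_two_pi_mul_I_mul {E : Type*} [NormedAddCommGroup E] [NormedSpace ℝ E]
    (f : ℂ → E) {w : ℂ} (hw : ‖w‖ = 1) :
    ∫ θ in (0:ℝ)..1, f (Complex.exp (2 * π * Complex.I * θ) * w) =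
      ∫ θ in (0:ℝ)..1, f (Complex.exp (2 * π * Complex.I * θ)) := by
  set c := Complex.arg w / (2 * π)
  have hw' : w = Complex.exp (2 * π * Complex.I * c) := by
    rw [← Complex.norm_mul_exp_arg_mul_I w, hw]
    push_cast [c]
    field_simp [pi_ne_zero]
  have hper : Function.Periodic (fun θ : ℝ => f (Complex.exp (2 * π * Complex.I * θ))) 1 :=
    fun θ => by simpa [mul_add] using congrArg f (Complex.exp_periodic (2 * π * Complex.I * θ))
  calc ∫ θ in (0:ℝ)..1, f (Complex.exp (2 * π * Complex.I * θ) * w)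
      = ∫ θ in (0:ℝ)..1, f (Complex.exp (2 * π * Complex.I * ↑(θ + c))) := by
        simp only [hw', ← Complex.exp_add, Complex.ofReal_add, mul_add]
    _ = ∫ θ in c..c + 1, f (Complex.exp (2 * π * Complex.I * θ)) := by
        rw [intervalIntegral.integral_comp_add_right
          (fun θ : ℝ => f (Complex.exp (2 * π * Complex.I * θ))), zero_add, add_comm]
    _ = _ := by simpa using hper.intervalIntegral_add_eq c 0

theorem zeta_mahler_measure_eq (r : ℂ) (hr : ‖r‖ = 1) (s : ℝ) (hs : |s| < 1) :
    ∫ θ in (0:ℝ)..1,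
        (‖Complex.exp (2 * Real.pi * Complex.I * θ) - r‖) ^ s =
      Real.Gamma (s + 1) / (Real.Gamma (s / 2 + 1)) ^ 2 := by
  have hr0 : r ≠ 0 := norm_ne_zero_iff.1 (hr.trans_ne one_ne_zero)
  have hrinv : ‖r⁻¹‖ = 1 := by rw [norm_inv, hr, inv_one]
  have hrotate (z : ℂ) : ‖z - r‖ = ‖z * r⁻¹ - 1‖ := by
    rw [← mul_one ‖z * r⁻¹ - 1‖, ← hr, ← norm_mul, sub_mul, inv_mul_cancel_right₀ hr0, one_mul]
  simp only [hrotate]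
  rw [integral_comp_exp_two_pi_mul_I_mul (fun z => ‖z - 1‖ ^ s) hrinv]
  exact integral_norm_exp_two_pi_mul_I_sub_one_rpow (abs_lt.1 hs).1
end

section
/- The second coefficient a_2 of the Taylor expansion of Z(s, x-r) (|r|=1) equals ζ(2)/4 = π²/24; equivalently, the second higher Mahler measure m_2(x-r) = ∫₀¹ log²|e^{2πiθ} - r| dθ = π²/12 for |r| = 1. -/
/-!
Rotating by `r⁻¹` and rescaling `θ` turn the integral into the average of `log² |1 - z|` over the
unit circle. Write `log² |w| = Re (log w)² + arg² w`. The argument term is explicit: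
`arg (1 - e^{iθ}) = θ/2 - π/2` on `(0, 2π)`, and its square averages to `π²/12`. The average of
`(log (1 - z))²` over the circle of radius `ρ < 1` is its value `0` at the centre; since
`|1 - ρ e^{iθ}| ≥ sin (θ/2)`, these integrands are dominated, uniformly in `ρ ≤ 1`, by the
integrable function `C + 32 / √(sin (θ/2))`, so the average over the unit circle vanishes too.
-/

open Real MeasureTheory Filter Topology Set
open Complex (I)
open scoped Interval

section

variable {E : Type*} [NormedAddCommGroup E] [NormedSpace ℝ E]

theorem circleAverage_comp_mul_left {a : ℂ} (ha : ‖a‖ = 1) (f : ℂ → E) :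
    circleAverage (fun z ↦ f (a * z)) 0 1 = circleAverage f 0 1 := by
  have hrot (θ : ℝ) : a * circleMap 0 1 θ = circleMap 0 1 (θ + Complex.arg a) := by
    conv_lhs => rw [← Complex.norm_mul_exp_arg_mul_I a, ha]
    simp only [circleMap, zero_add, Complex.ofReal_one, one_mul]
    rw [Complex.ofReal_add, add_mul, Complex.exp_add, mul_comm]
  rw [circleAverage_eq_integral_add (f := f) (Complex.arg a)]
  simp only [circleAverage, hrot]

theorem integral_comp_exp_two_pi_I_mul (f : ℂ → E) :
    ∫ t in (0 : ℝ)..1, f (Complex.exp (2 * π * I * t)) = circleAverage f 0 1 := by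
  have h (t : ℝ) : Complex.exp (2 * π * I * t) = circleMap 0 1 (2 * π * t) := by
    simp only [circleMap, zero_add, Complex.ofReal_one, one_mul]
    push_cast; ring_nf
  simp_rw [h, intervalIntegral.integral_comp_mul_left (fun θ ↦ f (circleMap 0 1 θ))
    two_pi_pos.ne', mul_zero, mul_one]
  rfl

end

theorem sq_log_le_div_sqrt {s : ℝ} (hs₀ : 0 < s) (hs₁ : s ≤ 1) : log s ^ 2 ≤ 16 / √s := by
  have h := (abs_log_mul_self_rpow_lt s (1 / 4) hs₀ hs₁ (by norm_num)).le
  have hq : (s ^ (1 / 4 : ℝ)) ^ 2 = √s := by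
    rw [← Real.rpow_natCast, ← Real.rpow_mul hs₀.le, Real.sqrt_eq_rpow]; norm_num
  rw [le_div_iff₀ (Real.sqrt_pos.2 hs₀), ← hq, ← mul_pow, ← sq_abs]
  nlinarith [abs_nonneg (log s * s ^ (1 / 4 : ℝ))]

theorem sin_half_le_norm_one_sub_circleMap {ρ : ℝ} (hρ : 0 ≤ ρ) (θ : ℝ) :
    sin (θ / 2) ≤ ‖1 - circleMap 0 ρ θ‖ := by
  have hnormSq : Complex.normSq (1 - circleMap 0 ρ θ) = 1 - 2 * ρ * cos θ + ρ ^ 2 := by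
    simp only [circleMap, zero_add, Complex.normSq_apply, Complex.sub_re, Complex.sub_im,
      Complex.one_re, Complex.one_im, Complex.re_ofReal_mul, Complex.im_ofReal_mul,
      Complex.exp_ofReal_mul_I_re, Complex.exp_ofReal_mul_I_im]
    linear_combination ρ ^ 2 * sin_sq_add_cos_sq θ
  have hsin : sin (θ / 2) ^ 2 = (1 - cos θ) / 2 := by
    rw [sin_sq_eq_half_sub, mul_div_cancel₀ θ two_ne_zero]; ring
  have hsq : sin (θ / 2) ^ 2 ≤ Complex.normSq (1 - circleMap 0 ρ θ) := by
    rw [hnormSq, hsin]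
    rcases le_or_gt (-1 / 2) (cos θ) with hc | hc
    · nlinarith [sq_nonneg (ρ - cos θ), cos_le_one θ]
    · nlinarith [mul_nonneg hρ (by linarith : 0 ≤ -cos θ), sq_nonneg ρ, neg_one_le_cos θ]
  calc sin (θ / 2) ≤ |sin (θ / 2)| := le_abs_self _
    _ ≤ √(Complex.normSq (1 - circleMap 0 ρ θ)) := Real.abs_le_sqrt hsq
    _ = ‖1 - circleMap 0 ρ θ‖ := (Complex.norm_def _).symm

theorem norm_one_sub_circleMap_le {ρ : ℝ} (hρ : |ρ| ≤ 1) (θ : ℝ) :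
    ‖1 - circleMap 0 ρ θ‖ ≤ 2 := by
  calc ‖1 - circleMap 0 ρ θ‖ ≤ ‖(1 : ℂ)‖ + ‖circleMap 0 ρ θ‖ := norm_sub_le _ _
    _ ≤ 2 := by rw [norm_one, norm_circleMap_zero]; linarith

theorem norm_log_sq_le_of_le_norm {w : ℂ} {s : ℝ} (hs₀ : 0 < s) (hs₁ : s ≤ 1) (hsw : s ≤ ‖w‖)
    (hw : ‖w‖ ≤ 2) : ‖Complex.log w ^ 2‖ ≤ 2 * (π + log 2) ^ 2 + 32 / √s := by
  have habs : |log ‖w‖| ≤ log 2 + -log s := by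
    rw [abs_le]
    constructor
    · linarith [log_le_log hs₀ hsw, log_nonneg one_le_two]
    · linarith [log_le_log (hs₀.trans_le hsw) hw, log_nonpos hs₀.le hs₁]
  have hlog : ‖Complex.log w‖ ≤ (π + log 2) + -log s :=
    calc ‖Complex.log w‖ ≤ |(Complex.log w).re| + |(Complex.log w).im| :=
          Complex.norm_le_abs_re_add_abs_im _
      _ = |log ‖w‖| + |Complex.arg w| := by rw [Complex.log_re, Complex.log_im]
      _ ≤ (π + log 2) + -log s := by linarith [Complex.abs_arg_le_pi w]
  calc ‖Complex.log w ^ 2‖ = ‖Complex.log w‖ ^ 2 := norm_pow _ _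
    _ ≤ ((π + log 2) + -log s) ^ 2 := pow_le_pow_left₀ (norm_nonneg _) hlog 2
    _ ≤ 2 * (π + log 2) ^ 2 + 2 * log s ^ 2 := by nlinarith [sq_nonneg (π + log 2 + log s)]
    _ ≤ 2 * (π + log 2) ^ 2 + 2 * (16 / √s) := by gcongr; exact sq_log_le_div_sqrt hs₀ hs₁
    _ = 2 * (π + log 2) ^ 2 + 32 / √s := by ring

theorem inv_sqrt_sin_half_le {θ : ℝ} (hθ₀ : 0 < θ) (hθπ : θ ≤ π) :
    (√(sin (θ / 2)))⁻¹ ≤ √π * θ ^ (-(1 / 2) : ℝ) := by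
  have hjordan : θ / π ≤ sin (θ / 2) := by
    calc θ / π = 2 / π * (θ / 2) := by ring
      _ ≤ sin (θ / 2) := mul_le_sin (by linarith) (by linarith)
  calc (√(sin (θ / 2)))⁻¹ ≤ (√(θ / π))⁻¹ :=
        inv_anti₀ (Real.sqrt_pos.2 (by positivity)) (Real.sqrt_le_sqrt hjordan)
    _ = √π * θ ^ (-(1 / 2) : ℝ) := by
        rw [Real.sqrt_div hθ₀.le, inv_div, Real.rpow_neg hθ₀.le, ← Real.sqrt_eq_rpow,
          div_eq_mul_inv]

theorem intervalIntegrable_inv_sqrt_sin_half :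
    IntervalIntegrable (fun θ ↦ (√(sin (θ / 2)))⁻¹) volume 0 (2 * π) := by
  have hrpow : IntervalIntegrable (fun θ : ℝ ↦ θ ^ (-(1 / 2) : ℝ)) volume 0 (2 * π) :=
    intervalIntegral.intervalIntegrable_rpow' (by norm_num)
  have hrpow' :
      IntervalIntegrable (fun θ : ℝ ↦ (2 * π - θ) ^ (-(1 / 2) : ℝ)) volume 0 (2 * π) := by
    simpa using (hrpow.comp_sub_left (2 * π)).symm
  refine ((hrpow.add hrpow').const_mul √π).mono_fun (by fun_prop) ?_
  rw [EventuallyLE, ae_restrict_iff' measurableSet_uIoc]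
  refine Eventually.of_forall fun θ hθ ↦ ?_
  rw [Set.uIoc_of_le two_pi_pos.le] at hθ
  have h₁ : 0 ≤ θ ^ (-(1 / 2) : ℝ) := Real.rpow_nonneg hθ.1.le _
  have h₂ : 0 ≤ (2 * π - θ) ^ (-(1 / 2) : ℝ) := Real.rpow_nonneg (by linarith [hθ.2]) _
  rw [Real.norm_of_nonneg (by positivity), Real.norm_of_nonneg (by positivity), mul_add]
  rcases le_or_gt θ π with hθπ | hθπ
  · linarith [inv_sqrt_sin_half_le hθ.1 hθπ, mul_nonneg (Real.sqrt_nonneg π) h₂]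
  rcases hθ.2.lt_or_eq with hθ2π | rfl
  · have hsym : sin (θ / 2) = sin ((2 * π - θ) / 2) := by
      rw [← sin_pi_sub]; ring_nf
    rw [hsym]
    linarith [inv_sqrt_sin_half_le (θ := 2 * π - θ) (by linarith) (by linarith),
      mul_nonneg (Real.sqrt_nonneg π) h₁]
  · rw [mul_div_cancel_left₀ π two_ne_zero, sin_pi, Real.sqrt_zero, inv_zero]
    positivity

theorem one_sub_circleMap_eq_polar (θ : ℝ) :
    1 - circleMap 0 1 θ = ↑(2 * sin (θ / 2)) *
      (Complex.cos ↑(θ / 2 - π / 2) + Complex.sin ↑(θ / 2 - π / 2) * I) := by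
  obtain ⟨φ, rfl⟩ : ∃ φ, θ = 2 * φ := ⟨θ / 2, by ring⟩
  rw [← Complex.ofReal_cos, ← Complex.ofReal_sin, cos_sub_pi_div_two, sin_sub_pi_div_two,
    mul_div_cancel_left₀ φ two_ne_zero]
  apply Complex.ext <;>
  simp only [circleMap, zero_add, Complex.ofReal_one, one_mul, Complex.sub_re, Complex.sub_im,
    Complex.one_re, Complex.one_im, Complex.exp_ofReal_mul_I_re, Complex.exp_ofReal_mul_I_im,
    Complex.mul_re, Complex.mul_im, Complex.add_re, Complex.add_im, Complex.ofReal_re,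
    Complex.ofReal_im, Complex.I_re, Complex.I_im, Complex.ofReal_neg, Complex.neg_re,
    Complex.neg_im, cos_two_mul, sin_two_mul] <;>
  nlinarith [sin_sq_add_cos_sq φ]

theorem arg_one_sub_circleMap {θ : ℝ} (hθ : θ ∈ Ioo 0 (2 * π)) :
    Complex.arg (1 - circleMap 0 1 θ) = θ / 2 - π / 2 := by
  have : 0 < sin (θ / 2) := sin_pos_of_pos_of_lt_pi (by linarith [hθ.1]) (by linarith [hθ.2])
  rw [one_sub_circleMap_eq_polar]
  exact Complex.arg_mul_cos_add_sin_mul_I (by positivity)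
    ⟨by linarith [hθ.1, pi_pos], by linarith [hθ.2, pi_pos]⟩

theorem one_sub_circleMap_mem_slitPlane {θ : ℝ} (hθ : θ ∈ Ioo 0 (2 * π)) :
    1 - circleMap 0 1 θ ∈ Complex.slitPlane := by
  have : 0 < sin (θ / 2) := sin_pos_of_pos_of_lt_pi (by linarith [hθ.1]) (by linarith [hθ.2])
  left
  rw [one_sub_circleMap_eq_polar, Complex.re_ofReal_mul, ← Complex.ofReal_cos,
    ← Complex.ofReal_sin, Complex.add_re, Complex.ofReal_re, Complex.re_ofReal_mul, Complex.I_re,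
    mul_zero, add_zero, cos_sub_pi_div_two]
  positivity

theorem ae_norm_log_one_sub_circleMap_sq_le {ρ : ℝ} (hρ₀ : 0 ≤ ρ) (hρ₁ : ρ ≤ 1) :
    ∀ᵐ θ, θ ∈ Ι 0 (2 * π) →
      ‖Complex.log (1 - circleMap 0 ρ θ) ^ 2‖ ≤ 2 * (π + log 2) ^ 2 + 32 / √(sin (θ / 2)) := by
  rw [uIoc_of_le two_pi_pos.le]
  filter_upwards [(Ioo_ae_eq_Ioc (μ := volume) (a := 0) (b := 2 * π)).mem_iff] with θ hθ hθ'
  replace hθ := hθ.2 hθ'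
  have hsin : 0 < sin (θ / 2) :=
    sin_pos_of_pos_of_lt_pi (by linarith [hθ.1]) (by linarith [hθ.2])
  exact norm_log_sq_le_of_le_norm hsin (sin_le_one _) (sin_half_le_norm_one_sub_circleMap hρ₀ θ)
    (norm_one_sub_circleMap_le (abs_le.2 ⟨by linarith, hρ₁⟩) θ)

theorem aestronglyMeasurable_log_one_sub_circleMap_sq {μ : Measure ℝ} (ρ : ℝ) :
    AEStronglyMeasurable (fun θ ↦ Complex.log (1 - circleMap 0 ρ θ) ^ 2) μ :=
  ((Complex.measurable_log.comp
    (measurable_const.sub (continuous_circleMap 0 ρ).measurable)).pow_const 2).aestronglyMeasurable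

theorem intervalIntegrable_const_add_div_sqrt_sin_half (a b : ℝ) :
    IntervalIntegrable (fun θ ↦ a + b / √(sin (θ / 2))) volume 0 (2 * π) := by
  simpa only [div_eq_mul_inv] using
    intervalIntegrable_const.add (intervalIntegrable_inv_sqrt_sin_half.const_mul b)

theorem circleIntegrable_log_one_sub_sq :
    CircleIntegrable (fun z ↦ Complex.log (1 - z) ^ 2) 0 1 :=
  (intervalIntegrable_const_add_div_sqrt_sin_half _ _).mono_fun'
    (aestronglyMeasurable_log_one_sub_circleMap_sq 1)
    ((ae_restrict_iff' measurableSet_uIoc).2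
      (ae_norm_log_one_sub_circleMap_sq_le zero_le_one le_rfl))

theorem circleAverage_log_one_sub_sq_of_abs_lt_one {ρ : ℝ} (hρ : |ρ| < 1) :
    circleAverage (fun z ↦ Complex.log (1 - z) ^ 2) 0 ρ = 0 := by
  have hdiff : DifferentiableOn ℂ (fun z ↦ Complex.log (1 - z) ^ 2)
      (closure (Metric.ball 0 |ρ|)) := by
    intro z hz
    have hz₁ : ‖-z‖ < 1 := by
      rw [norm_neg]
      exact (mem_closedBall_zero_iff.1 (Metric.closure_ball_subset_closedBall hz)).trans_lt hρ
    have hslit : 1 - z ∈ Complex.slitPlane := by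
      simpa [← sub_eq_add_neg] using Complex.mem_slitPlane_of_norm_lt_one hz₁
    exact ((differentiableAt_const _).sub differentiableAt_id |>.clog hslit |>.pow 2)
      |>.differentiableWithinAt
  simpa using hdiff.diffContOnCl.circleAverage

theorem tendsto_circleAverage_log_one_sub_sq :
    Tendsto (circleAverage (fun z ↦ Complex.log (1 - z) ^ 2) 0) (𝓝[<] 1)
      (𝓝 (circleAverage (fun z ↦ Complex.log (1 - z) ^ 2) 0 1)) := by
  have hnear : ∀ᶠ ρ in 𝓝[<] (1 : ℝ), ρ ∈ Ioo 0 1 := Ioo_mem_nhdsLT one_pos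
  refine Tendsto.const_smul (intervalIntegral.tendsto_integral_filter_of_dominated_convergence _
    (Eventually.of_forall aestronglyMeasurable_log_one_sub_circleMap_sq) ?_
    (intervalIntegrable_const_add_div_sqrt_sin_half (2 * (π + log 2) ^ 2) 32) ?_) _
  · filter_upwards [hnear] with ρ hρ
    exact ae_norm_log_one_sub_circleMap_sq_le hρ.1.le hρ.2.le
  · rw [uIoc_of_le two_pi_pos.le]
    filter_upwards [(Ioo_ae_eq_Ioc (μ := volume) (a := 0) (b := 2 * π)).mem_iff] with θ hθ hθ'
    have hcont : ContinuousAt (fun ρ : ℝ ↦ Complex.log (1 - circleMap 0 ρ θ) ^ 2) 1 :=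
      (ContinuousAt.clog (f := fun ρ : ℝ ↦ 1 - circleMap 0 ρ θ) (by unfold circleMap; fun_prop)
        (one_sub_circleMap_mem_slitPlane (hθ.2 hθ'))).pow 2
    exact hcont.tendsto.mono_left nhdsWithin_le_nhds

theorem circleAverage_log_one_sub_sq :
    circleAverage (fun z ↦ Complex.log (1 - z) ^ 2) 0 1 = 0 :=
  tendsto_nhds_unique tendsto_circleAverage_log_one_sub_sq <| tendsto_const_nhds.congr' <| by
    filter_upwards [Ioo_mem_nhdsLT one_pos] with ρ hρ
    rw [circleAverage_log_one_sub_sq_of_abs_lt_one (abs_lt.2 ⟨by linarith [hρ.1], hρ.2⟩)]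

theorem log_norm_sq_eq_re_log_sq_add_arg_sq (w : ℂ) :
    log ‖w‖ ^ 2 = (Complex.log w ^ 2).re + Complex.arg w ^ 2 := by
  rw [pow_two (Complex.log w), Complex.mul_re, Complex.log_re, Complex.log_im]; ring

theorem circleIntegrable_arg_one_sub_sq :
    CircleIntegrable (fun z ↦ Complex.arg (1 - z) ^ 2) 0 1 :=
  (intervalIntegrable_const (c := π ^ 2)).mono_fun'
    ((Complex.measurable_arg.comp
      (measurable_const.sub (continuous_circleMap 0 1).measurable)).pow_const 2
      |>.aestronglyMeasurable)
    (Eventually.of_forall fun θ ↦ by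
      change ‖Complex.arg (1 - circleMap 0 1 θ) ^ 2‖ ≤ π ^ 2
      rw [norm_pow, Real.norm_eq_abs]
      exact pow_le_pow_left₀ (abs_nonneg _) (Complex.abs_arg_le_pi _) 2)

theorem circleAverage_arg_one_sub_sq :
    circleAverage (fun z ↦ Complex.arg (1 - z) ^ 2) 0 1 = π ^ 2 / 12 := by
  have hcongr : ∫ θ in 0..2 * π, Complex.arg (1 - circleMap 0 1 θ) ^ 2 =
      ∫ θ in 0..2 * π, (θ - π) ^ 2 / 4 := by
    refine intervalIntegral.integral_congr_ae ?_
    rw [uIoc_of_le two_pi_pos.le]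
    filter_upwards [(Ioo_ae_eq_Ioc (μ := volume) (a := 0) (b := 2 * π)).mem_iff] with θ hθ hθ'
    rw [arg_one_sub_circleMap (hθ.2 hθ')]; ring
  rw [circleAverage_def, hcongr, intervalIntegral.integral_div,
    intervalIntegral.integral_comp_sub_right (fun x ↦ x ^ 2), integral_pow, smul_eq_mul]
  field_simp
  ring

theorem circleAverage_log_norm_one_sub_sq :
    circleAverage (fun z ↦ log ‖1 - z‖ ^ 2) 0 1 = π ^ 2 / 12 := by
  simp_rw [log_norm_sq_eq_re_log_sq_add_arg_sq]
  have hre : CircleIntegrable (fun z ↦ (Complex.log (1 - z) ^ 2).re) 0 1 :=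
    ⟨circleIntegrable_log_one_sub_sq.1.re, circleIntegrable_log_one_sub_sq.2.re⟩
  rw [circleAverage_fun_add hre circleIntegrable_arg_one_sub_sq, circleAverage_arg_one_sub_sq,
    show (fun z ↦ (Complex.log (1 - z) ^ 2).re) =
      Complex.reCLM ∘ fun z ↦ Complex.log (1 - z) ^ 2 from rfl,
    Complex.reCLM.circleAverage_comp_comm circleIntegrable_log_one_sub_sq,
    circleAverage_log_one_sub_sq, map_zero, zero_add]

theorem m_two_eq (r : ℂ) (hr : ‖r‖ = 1) :
    ∫ θ in (0:ℝ)..1,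
        (Real.log ‖Complex.exp (2 * Real.pi * Complex.I * θ) - r‖) ^ 2 =
      Real.pi ^ 2 / 12 := by
  have hr₀ : r ≠ 0 := norm_ne_zero_iff.1 (hr ▸ one_ne_zero)
  have hrotate (z : ℂ) : log ‖z - r‖ ^ 2 = log ‖1 - r⁻¹ * z‖ ^ 2 := by
    rw [show 1 - r⁻¹ * z = r⁻¹ * (r - z) by field_simp, norm_mul, norm_inv, hr, inv_one, one_mul,
      norm_sub_rev]
  calc ∫ θ in (0:ℝ)..1, log ‖Complex.exp (2 * π * I * θ) - r‖ ^ 2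
      = circleAverage (fun z ↦ log ‖1 - r⁻¹ * z‖ ^ 2) 0 1 := by
        simp_rw [integral_comp_exp_two_pi_I_mul (fun z ↦ log ‖z - r‖ ^ 2), hrotate]
    _ = circleAverage (fun z ↦ log ‖1 - z‖ ^ 2) 0 1 :=
        circleAverage_comp_mul_left (by rw [norm_inv, hr, inv_one]) (fun z ↦ log ‖1 - z‖ ^ 2)
    _ = π ^ 2 / 12 := circleAverage_log_norm_one_sub_sq
end

section
/- For every k > 1, 1/k² - (1 - 2^{-k})ζ(k+1) + (1 - 2^{-(k-1)})ζ(k) > 1/k² - 2^{-(k+1)} > 0. -/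
/-!
With `η(s) = (1 - 2^(1-s)) ζ(s) = ∑_{n ≥ 0} (1/(2n+1)^s - 1/(2n+2)^s)`, the middle expression minus
`1/k²` is `η(k) - η(k+1) = ∑_{n ≥ 0} (g(2n+1) - g(2n+2))` where `g(x) = 1/x^k - 1/x^(k+1)`.
The `n = 0` term is `-2^(-(k+1))`, and all later terms are positive because, by Bernoulli's
inequality, `g(a+1) < g(a)` as soon as `k (a - 1) > 1`. The second inequality is `k² < 2^(k+1)`.
-/

open Filter Topology Finset

noncomputable def dirichletEta (s : ℕ) : ℝ := (1 - (2 : ℝ) ^ (-((s : ℤ) - 1))) * zeta s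

lemma summable_one_div_add_one_pow {s : ℕ} (hs : 1 < s) :
    Summable fun n : ℕ => 1 / ((n : ℝ) + 1) ^ s := by
  simpa using (summable_nat_add_iff 1).mpr (Real.summable_one_div_nat_pow.mpr hs)

lemma hasSum_dirichletEta {s : ℕ} (hs : 1 < s) :
    HasSum (fun n : ℕ => 1 / (2 * (n : ℝ) + 1) ^ s - 1 / (2 * (n : ℝ) + 2) ^ s)
      (dirichletEta s) := by
  have hz : HasSum (fun n : ℕ => 1 / ((n : ℝ) + 1) ^ s) (zeta s) :=
    (summable_one_div_add_one_pow hs).hasSum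
  have hodd : HasSum (fun n : ℕ => 1 / (((2 * n : ℕ) : ℝ) + 1) ^ s)
      (∑' n : ℕ, 1 / (((2 * n : ℕ) : ℝ) + 1) ^ s) :=
    ((summable_one_div_add_one_pow hs).comp_injective (mul_right_injective₀ two_ne_zero)).hasSum
  have heven : HasSum (fun n : ℕ => 1 / (((2 * n + 1 : ℕ) : ℝ) + 1) ^ s) ((2 ^ s)⁻¹ * zeta s) := by
    refine (hz.mul_left _).congr_fun fun n => ?_
    push_cast
    rw [show 2 * (n : ℝ) + 1 + 1 = 2 * (n + 1) by ring, mul_pow]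
    field_simp
  have hsplit := (HasSum.even_add_odd (f := fun n : ℕ => 1 / ((n : ℝ) + 1) ^ s) hodd heven).unique hz
  have hval : dirichletEta s = ∑' n : ℕ, 1 / (((2 * n : ℕ) : ℝ) + 1) ^ s - (2 ^ s)⁻¹ * zeta s := by
    rw [dirichletEta, neg_sub, zpow_sub₀ two_ne_zero, zpow_one, zpow_natCast]
    linear_combination (-1 : ℝ) * hsplit
  rw [hval]
  refine (hodd.sub heven).congr_fun fun n => ?_
  push_cast
  ring

lemma one_div_pow_sub_one_div_pow_succ_lt {k : ℕ} {a : ℝ} (h : 1 < k * (a - 1)) :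
    1 / (a + 1) ^ k - 1 / (a + 1) ^ (k + 1) < 1 / a ^ k - 1 / a ^ (k + 1) := by
  have ha : 1 < a := by
    by_contra! ha
    nlinarith [(Nat.cast_nonneg k : (0 : ℝ) ≤ k)]
  have hbern : a ^ (k + 1) + (k + 1) * a ^ k ≤ (a + 1) ^ (k + 1) := by
    simpa using pow_add_mul_le_add_pow (b := 1) (by positivity : (0 : ℝ) ≤ a) (by linarith) (k + 1)
  have key : a * a ^ (k + 1) < (a - 1) * (a + 1) ^ (k + 1) := by
    have hak : 0 < a ^ k := by positivity
    calc a * a ^ (k + 1) < (a - 1) * (a ^ (k + 1) + (k + 1) * a ^ k) := by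
          rw [pow_succ]; nlinarith
      _ ≤ (a - 1) * (a + 1) ^ (k + 1) := by gcongr
  have e : ∀ x : ℝ, x ≠ 0 → 1 / x ^ k - 1 / x ^ (k + 1) = (x - 1) / x ^ (k + 1) := by
    intro x hx
    field_simp
    ring
  rw [e _ (by positivity), e _ (by positivity), add_sub_cancel_right,
    div_lt_div_iff₀ (by positivity) (by positivity)]
  exact key

lemma HasSum.apply_zero_lt {α : Type*} [AddCommGroup α] [PartialOrder α] [IsOrderedAddMonoid α]
    [TopologicalSpace α] [IsTopologicalAddGroup α] [OrderClosedTopology α] {f : ℕ → α} {a : α}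
    (hf : HasSum f a) (hpos : ∀ n, 0 < f (n + 1)) : f 0 < a := by
  have htail : HasSum (fun n => f (n + 1)) (a - f 0) := by
    simpa using (hasSum_nat_add_iff' 1).mpr hf
  rw [← sub_pos, ← htail.tsum_eq]
  exact htail.summable.tsum_pos (fun n => (hpos n).le) 0 (hpos 0)

lemma neg_one_div_two_pow_succ_lt_dirichletEta_sub {k : ℕ} (hk : 1 < k) :
    -(1 / 2 ^ (k + 1)) < dirichletEta k - dirichletEta (k + 1) := by
  have hk2 : (2 : ℝ) ≤ k := by exact_mod_cast hk
  refine lt_of_eq_of_lt ?_ <| HasSum.apply_zero_lt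
    ((hasSum_dirichletEta hk).sub (hasSum_dirichletEta (by omega))) fun n => ?_
  · norm_num
    field_simp
    ring
  · have h := one_div_pow_sub_one_div_pow_succ_lt (k := k) (a := 2 * ((n + 1 : ℕ) : ℝ) + 1)
      (by push_cast; nlinarith [mul_nonneg (by positivity : (0 : ℝ) ≤ k) (Nat.cast_nonneg' n)])
    rw [add_assoc, one_add_one_eq_two] at h
    linarith

lemma sq_lt_two_pow_succ (n : ℕ) : n ^ 2 < 2 ^ (n + 1) := by
  induction n with
  | zero => norm_num
  | succ n ih =>
    have : 2 * n + 2 ≤ 2 ^ (n + 1) := by rw [pow_succ]; linarith [@Nat.lt_two_pow_self n]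
    rw [pow_succ 2 (n + 1)]
    nlinarith

theorem eta_diff_bound (k : ℕ) (hk : 1 < k) :
    1 / (k : ℝ) ^ 2 - (1 - (2 : ℝ) ^ (-(k : ℤ))) * zeta (k + 1)
        + (1 - (2 : ℝ) ^ (-((k : ℤ) - 1))) * zeta k
      > 1 / (k : ℝ) ^ 2 - (2 : ℝ) ^ (-((k : ℤ) + 1)) ∧
    1 / (k : ℝ) ^ 2 - (2 : ℝ) ^ (-((k : ℤ) + 1)) > 0 := by
  have hpow : (2 : ℝ) ^ (-((k : ℤ) + 1)) = 1 / 2 ^ (k + 1) := by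
    rw [← Nat.cast_succ, zpow_neg, zpow_natCast, one_div]
  have hsucc : (1 - (2 : ℝ) ^ (-(k : ℤ))) * zeta (k + 1) = dirichletEta (k + 1) := by
    simp [dirichletEta]
  have hsq : 1 / (2 : ℝ) ^ (k + 1) < 1 / (k : ℝ) ^ 2 :=
    one_div_lt_one_div_of_lt (by positivity) (by exact_mod_cast sq_lt_two_pow_succ k)
  have hη : (1 - (2 : ℝ) ^ (-((k : ℤ) - 1))) * zeta k = dirichletEta k := rfl
  rw [hpow, hsucc, hη]
  exact ⟨by linarith [neg_one_div_two_pow_succ_lt_dirichletEta_sub hk], by linarith⟩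
end
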